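/- arXiv:0801.4360 — 7 statements merged into one kernel-verified Lean document; each statement's English description precedes it below -/
import Mathlib

section
/- For the k-dimensional Lyness map F(x_1,...,x_k) = (x_2,...,x_k,(a + x_2 + ... + x_k)/x_1) with a ≥ 0, the function V_1(x) = (a + Σ_{i=1}^k x_i)·(Π_{i=1}^k (x_i+1))/(x_1···x_k) is a first integral of F on the positive orthant, i.e., V_1(F(x)) = V_1(x) for all x with all coordinates positive. -/
/-!
Write `y = F x` and `t` for its last coordinate. Then `y` is `x` with `x₀` dropped and `t`
appended, so the sum, the product and the product of the `xᵢ + 1` each change only by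
trading `x₀` for `t`. The defining relation `t x₀ = a + ∑ xᵢ - x₀` factors the remaining
terms symmetrically: `a + ∑ yᵢ = t (x₀ + 1)` and `a + ∑ xᵢ = x₀ (t + 1)`.
-/

@[to_additive]
theorem Fin.prod_mul_eq_prod_mul_of_init_eq_tail {α M : Type*} [CommMonoid M] {m : ℕ}
    (g : α → M) {x y : Fin (m + 1) → α} (h : Fin.init y = Fin.tail x) :
    (∏ i, g (y i)) * g (x 0) = (∏ i, g (x i)) * g (y (Fin.last m)) := by
  have hy : ∀ i : Fin m, y i.castSucc = x i.succ := congrFun h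
  rw [Fin.prod_univ_castSucc, Fin.prod_univ_succ]
  simp only [hy]
  ac_rfl

theorem lyness_V1_eq_of_shift {K : Type*} [Field K] {a x₀ t Sx Sy Px Py Qx Qy : K}
    (hx₀ : x₀ ≠ 0) (hx₀' : x₀ + 1 ≠ 0) (ht : t ≠ 0) (hPx : Px ≠ 0)
    (hlast : t * x₀ = a + Sx - x₀) (hS : Sy + x₀ = Sx + t) (hP : Py * x₀ = Px * t)
    (hQ : Qy * (x₀ + 1) = Qx * (t + 1)) :
    (a + Sy) * Qy / Py = (a + Sx) * Qx / Px := by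
  have hSy : a + Sy = t * (x₀ + 1) := by linear_combination hS - hlast
  have hSx : a + Sx = x₀ * (t + 1) := by linear_combination -hlast
  have hPy : Py = Px * t / x₀ := by rw [eq_div_iff hx₀, hP]
  have hQy : Qy = Qx * (t + 1) / (x₀ + 1) := by rw [eq_div_iff hx₀', hQ]
  rw [hSy, hSx, hPy, hQy]
  field_simp

/-- `V₁` is a first integral of the `k`-dimensional Lyness map. -/
theorem lyness_V1_first_integral (k : ℕ) (hk : 2 ≤ k) (a : ℝ) (ha : 0 ≤ a)
    (F : (Fin k → ℝ) → (Fin k → ℝ))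
    (hF : ∀ x : Fin k → ℝ, ∀ i : Fin k,
      F x i = if h : (i : ℕ) + 1 < k then x ⟨(i : ℕ) + 1, h⟩
              else (a + (∑ j, x j) - x ⟨0, by omega⟩) / x ⟨0, by omega⟩)
    (V1 : (Fin k → ℝ) → ℝ)
    (hV1 : ∀ x : Fin k → ℝ, V1 x = (a + ∑ j, x j) * (∏ j, (x j + 1)) / ∏ j, x j)
    (x : Fin k → ℝ) (hx : ∀ i, 0 < x i) :
    V1 (F x) = V1 x := by
  obtain ⟨m, rfl⟩ : ∃ m, k = m + 1 := ⟨k - 1, by omega⟩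
  have hinit : Fin.init (F x) = Fin.tail x :=
    funext fun i => by rw [Fin.init, hF, dif_pos (by simp)]; rfl
  have hlast : F x (Fin.last m) * x 0 = a + ∑ j, x j - x 0 := by
    rw [hF, dif_neg (by simp)]
    exact div_mul_cancel₀ _ (hx 0).ne'
  have ht : 0 < F x (Fin.last m) := by
    have htail : 0 < ∑ i : Fin m, x i.succ :=
      Finset.sum_pos (fun i _ => hx _) (Finset.univ_nonempty_iff.2 ⟨⟨0, by omega⟩⟩)
    rw [hF, dif_neg (by simp), Fin.mk_zero', Fin.sum_univ_succ]
    exact div_pos (by linarith) (hx 0)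
  rw [hV1, hV1]
  exact lyness_V1_eq_of_shift (hx 0).ne' (by linarith [hx 0]) ht.ne'
    (Finset.prod_pos fun i _ => hx i).ne' hlast
    (Fin.sum_add_eq_sum_add_of_init_eq_tail id hinit)
    (Fin.prod_mul_eq_prod_mul_of_init_eq_tail id hinit)
    (Fin.prod_mul_eq_prod_mul_of_init_eq_tail (· + 1) hinit)
end

section
/- Let k = 2ℓ+1 be odd and let F be the k-dimensional Lyness map with parameter a ≥ 0. Then the function W(x) = (Π_{j=0}^{ℓ}(x_{2j+1}+1))/(Π_{j=1}^{ℓ} x_{2j}) satisfies W(F(F(x))) = W(x) for all x in the positive orthant; that is, W is a first integral of F∘F. -/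
/-!
`F ∘ F` shifts the coordinates by two and appends `y = F(x)_k` and `z = F(F(x))_k`, so in
`W(F(F(x)))` the factor `x₁ + 1` of the numerator is replaced by `z + 1` and the factor `x₂` of
the denominator by `y`. These trades cancel: `x₁ y = a + x₂ + ⋯ + x_k` and
`x₂ z = a + x₃ + ⋯ + x_k + y`, hence `x₂ (z + 1) = x₁ y + y = (x₁ + 1) y`.
-/

open Finset

section Lyness

variable {n : ℕ} (a : ℝ) (x : Fin (n + 1) → ℝ)

/-- Coordinates are numbered from `0`, so `x 0` is the paper's `x₁`. -/
noncomputable def lyness : Fin (n + 1) → ℝ := fun i =>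
  if h : (i : ℕ) + 1 < n + 1 then x ⟨(i : ℕ) + 1, h⟩
  else (a + (∑ j, x j) - x ⟨0, by omega⟩) / x ⟨0, by omega⟩

theorem lyness_apply_of_lt {i : ℕ} (h : i + 1 < n + 1) :
    lyness a x ⟨i, by omega⟩ = x ⟨i + 1, h⟩ :=
  dif_pos h

theorem lyness_last : lyness a x (Fin.last n) = (a + ∑ j, x j - x 0) / x 0 :=
  dif_neg (by simp)

theorem sum_lyness : ∑ j, lyness a x j = ∑ j, x j - x 0 + lyness a x (Fin.last n) := by
  rw [Fin.sum_univ_castSucc, Fin.sum_univ_succ (f := x)]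
  simp only [add_sub_cancel_left]
  congr 2 with i
  exact lyness_apply_of_lt a x (by simp)

theorem lyness_lyness_apply_of_lt {i : ℕ} (h : i + 2 < n + 1) :
    lyness a (lyness a x) ⟨i, by omega⟩ = x ⟨i + 2, h⟩ := by
  rw [lyness_apply_of_lt _ _ (by omega), lyness_apply_of_lt]

theorem lyness_lyness_last (hn : 1 ≤ n) :
    lyness a (lyness a x) (Fin.last n) =
      (a + (∑ j, x j - x 0 + lyness a x (Fin.last n)) - x ⟨1, by omega⟩) / x ⟨1, by omega⟩ := by
  rw [lyness_last, sum_lyness]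
  congr 2 <;> exact lyness_apply_of_lt a x _

end Lyness

theorem lyness_two_step_ratio {x₀ x₁ b : ℝ} (h₀ : x₀ ≠ 0) (h₁ : x₁ ≠ 0) (hb : b ≠ 0) :
    ((b + b / x₀ - x₁) / x₁ + 1) / (b / x₀) = (x₀ + 1) / x₁ := by
  field_simp
  ring

noncomputable def lynessW (l : ℕ) (x : Fin (2 * l + 1) → ℝ) : ℝ :=
  (∏ j : Fin (l + 1), (x ⟨2 * (j : ℕ), Nat.lt_succ_of_le (Nat.mul_le_mul_left 2 j.is_le)⟩ + 1)) /
    ∏ j : Fin l, x ⟨2 * (j : ℕ) + 1, Nat.succ_lt_succ (Nat.mul_lt_mul_of_pos_left j.isLt two_pos)⟩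

theorem lynessW_lyness_lyness {m : ℕ} (a : ℝ) (x : Fin (2 * (m + 1) + 1) → ℝ)
    (h₀ : x 0 ≠ 0) (h₁ : x ⟨1, by omega⟩ ≠ 0)
    (hb : a + ∑ j, x j - x 0 ≠ 0) :
    lynessW (m + 1) (lyness a (lyness a x)) = lynessW (m + 1) x := by
  set P := ∏ j : Fin (m + 1), (x ⟨2 * (j : ℕ) + 2, by omega⟩ + 1)
  set Q := ∏ j : Fin m, x ⟨2 * (j : ℕ) + 3, by omega⟩
  have num_x : ∏ j : Fin (m + 2), (x ⟨2 * (j : ℕ), by omega⟩ + 1) = (x 0 + 1) * P := by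
    rw [Fin.prod_univ_succ]; rfl
  have den_x : ∏ j : Fin (m + 1), x ⟨2 * (j : ℕ) + 1, by omega⟩ = x ⟨1, by omega⟩ * Q := by
    rw [Fin.prod_univ_succ]; rfl
  have num_FFx : ∏ j : Fin (m + 2), (lyness a (lyness a x) ⟨2 * (j : ℕ), by omega⟩ + 1) =
      P * (lyness a (lyness a x) (Fin.last _) + 1) := by
    rw [Fin.prod_univ_castSucc]
    congr 1
    exact prod_congr rfl fun j _ => by
      rw [lyness_lyness_apply_of_lt a x (by rw [Fin.val_castSucc]; omega)]; rfl
  have den_FFx : ∏ j : Fin (m + 1), lyness a (lyness a x) ⟨2 * (j : ℕ) + 1, by omega⟩ =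
      Q * lyness a x (Fin.last _) := by
    rw [Fin.prod_univ_castSucc]
    congr 1
    · exact prod_congr rfl fun j _ => by
        rw [lyness_lyness_apply_of_lt a x (by rw [Fin.val_castSucc]; omega)]; rfl
    · exact lyness_apply_of_lt a _ _
  unfold lynessW
  rw [num_x, den_x, num_FFx, den_FFx, mul_comm (x 0 + 1), mul_comm (x _), mul_div_mul_comm,
    mul_div_mul_comm, lyness_lyness_last _ _ (by omega), ← lyness_two_step_ratio h₀ h₁ hb,
    lyness_last]
  ring

theorem lyness_pos_numerator {n : ℕ} {a : ℝ} {x : Fin (n + 1) → ℝ} (hn : 1 ≤ n) (ha : 0 ≤ a)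
    (hx : ∀ i, 0 < x i) : 0 < a + ∑ j, x j - x 0 := by
  have htail : 0 < ∑ j : Fin n, x j.succ :=
    sum_pos (fun j _ => hx _) (univ_nonempty_iff.2 ⟨⟨0, hn⟩⟩)
  rw [Fin.sum_univ_succ]
  linarith

/-- for odd `k = 2ℓ+1`, `W` is a first integral of `F ∘ F`. -/
theorem lyness_W_two_integral (l : ℕ) (hl : 1 ≤ l) (a : ℝ) (ha : 0 ≤ a)
    (F : (Fin (2 * l + 1) → ℝ) → (Fin (2 * l + 1) → ℝ))
    (hF : ∀ x : Fin (2 * l + 1) → ℝ, ∀ i : Fin (2 * l + 1),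
      F x i = if h : (i : ℕ) + 1 < 2 * l + 1 then x ⟨(i : ℕ) + 1, h⟩
              else (a + (∑ j, x j) - x ⟨0, by omega⟩) / x ⟨0, by omega⟩)
    (W : (Fin (2 * l + 1) → ℝ) → ℝ)
    (hW : ∀ x : Fin (2 * l + 1) → ℝ, W x =
      (∏ j : Fin (l + 1), (x ⟨2 * (j : ℕ), by have := j.isLt; omega⟩ + 1)) /
        ∏ j : Fin l, x ⟨2 * (j : ℕ) + 1, by have := j.isLt; omega⟩)
    (x : Fin (2 * l + 1) → ℝ) (hx : ∀ i, 0 < x i) :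
    W (F (F x)) = W x := by
  obtain ⟨m, rfl⟩ : ∃ m, l = m + 1 := ⟨l - 1, by omega⟩
  obtain rfl : F = lyness a := funext fun x => funext (hF x)
  obtain rfl : W = lynessW (m + 1) := funext hW
  exact lynessW_lyness_lyness a x (hx 0).ne' (hx _).ne' (lyness_pos_numerator (by omega) ha hx).ne'
end

section
/- Consider the 4-dimensional Lyness map F(x,y,z,t) = (y, z, t, (a+y+z+t)/x), a ≥ 0, and the vector field X_4(x,y,z,t) = (1/(xyzt))·[ x(x+1)(1+y+z)(1+z+t)(a+x+y+z−yt), y(y+1)(1+z+t)(a+x+y+z+t+xt)(x−z), z(z+1)(1+x+y)(a+x+y+z+t+xt)(y−t), −t(t+1)(1+x+y)(1+y+z)(a+y+z+t−xz) ]. Then X_4 is a Lie symmetry of F: X_4(F(p)) = DF(p)·X_4(p) for all p in the positive orthant. -/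
/-!
The Lyness map is a shift map `(x, y, z, t) ↦ (y, z, t, g(x, y, z, t))`, so its differential
sends `v` to `(v₂, v₃, v₄, Dg · v)`. The first three components of `X ∘ F = DF · X` therefore
just compare `X` at `F p` with the shifted components of `X` at `p`, and the last one involves
only the gradient of `g = (a + y + z + t) / x`; each is an identity of rational functions
whose denominators are nonzero on the positive orthant.
-/

section ShiftMap

variable {𝕜 : Type*} [NontriviallyNormedField 𝕜] {E : Type*} [NormedAddCommGroup E]
  [NormedSpace 𝕜 E]

theorem fderiv_shift_apply {g : E × E × E × E → E} {p : E × E × E × E}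
    (hg : DifferentiableAt 𝕜 g p) (v : E × E × E × E) :
    fderiv 𝕜 (fun q => (q.2.1, q.2.2.1, q.2.2.2, g q)) p v =
      (v.2.1, v.2.2.1, v.2.2.2, fderiv 𝕜 g p v) := by
  have h2 : HasFDerivAt (𝕜 := 𝕜) (fun q : E × E × E × E => q.2.1) _ p := hasFDerivAt_snd.fst
  have h3 : HasFDerivAt (𝕜 := 𝕜) (fun q : E × E × E × E => q.2.2.1) _ p :=
    hasFDerivAt_snd.snd.fst
  have h4 : HasFDerivAt (𝕜 := 𝕜) (fun q : E × E × E × E => q.2.2.2) _ p :=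
    hasFDerivAt_snd.snd.snd
  rw [(h2.prodMk (h3.prodMk (h4.prodMk hg.hasFDerivAt))).fderiv]
  rfl

end ShiftMap

section Lyness

variable {𝕜 : Type*} [NontriviallyNormedField 𝕜]

def lynessNext (a : 𝕜) (q : 𝕜 × 𝕜 × 𝕜 × 𝕜) : 𝕜 := (a + q.2.1 + q.2.2.1 + q.2.2.2) / q.1

theorem differentiableAt_lynessNext (a : 𝕜) {p : 𝕜 × 𝕜 × 𝕜 × 𝕜} (hp : p.1 ≠ 0) :
    DifferentiableAt 𝕜 (lynessNext a) p := by
  unfold lynessNext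
  fun_prop (disch := exact hp)

theorem fderiv_lynessNext_apply (a : 𝕜) {p : 𝕜 × 𝕜 × 𝕜 × 𝕜} (hp : p.1 ≠ 0)
    (v : 𝕜 × 𝕜 × 𝕜 × 𝕜) :
    fderiv 𝕜 (lynessNext a) p v =
      ((v.2.1 + v.2.2.1 + v.2.2.2) * p.1 - (a + p.2.1 + p.2.2.1 + p.2.2.2) * v.1) / p.1 ^ 2 := by
  have hnum : HasFDerivAt (𝕜 := 𝕜)
      (fun q : 𝕜 × 𝕜 × 𝕜 × 𝕜 => a + q.2.1 + q.2.2.1 + q.2.2.2) _ p :=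
    (((hasFDerivAt_const a p).add hasFDerivAt_snd.fst).add hasFDerivAt_snd.snd.fst).add
      hasFDerivAt_snd.snd.snd
  have hinv : HasFDerivAt (𝕜 := 𝕜) (fun q : 𝕜 × 𝕜 × 𝕜 × 𝕜 => q.1⁻¹) _ p :=
    (hasDerivAt_inv hp).comp_hasFDerivAt p hasFDerivAt_fst
  have hmul : lynessNext a = fun q => (a + q.2.1 + q.2.2.1 + q.2.2.2) * q.1⁻¹ :=
    funext fun q => div_eq_mul_inv _ _
  rw [hmul, (hnum.fun_mul hinv).fderiv]
  simp only [zero_add, add_apply, smul_apply,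
    ContinuousLinearMap.comp_apply, ContinuousLinearMap.coe_fst', ContinuousLinearMap.coe_snd',
    smul_eq_mul]
  field_simp
  ring

end Lyness

/-- the vector field `X₄` is a Lie symmetry of the 4-dimensional
Lyness map: `X₄(F(p)) = DF(p)·X₄(p)` on the positive orthant. -/
theorem lyness4_lie_symmetry (a : ℝ) (ha : 0 ≤ a)
    (F X : ℝ × ℝ × ℝ × ℝ → ℝ × ℝ × ℝ × ℝ)
    (hF : ∀ p : ℝ × ℝ × ℝ × ℝ,
      F p = (p.2.1, p.2.2.1, p.2.2.2, (a + p.2.1 + p.2.2.1 + p.2.2.2) / p.1))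
    (hX : ∀ p : ℝ × ℝ × ℝ × ℝ,
      X p = (1 / (p.1 * p.2.1 * p.2.2.1 * p.2.2.2)) •
        ((p.1 * (p.1 + 1) * (1 + p.2.1 + p.2.2.1) * (1 + p.2.2.1 + p.2.2.2) *
            (a + p.1 + p.2.1 + p.2.2.1 - p.2.1 * p.2.2.2),
          p.2.1 * (p.2.1 + 1) * (1 + p.2.2.1 + p.2.2.2) *
            (a + p.1 + p.2.1 + p.2.2.1 + p.2.2.2 + p.1 * p.2.2.2) * (p.1 - p.2.2.1),
          p.2.2.1 * (p.2.2.1 + 1) * (1 + p.1 + p.2.1) *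
            (a + p.1 + p.2.1 + p.2.2.1 + p.2.2.2 + p.1 * p.2.2.2) * (p.2.1 - p.2.2.2),
          -(p.2.2.2 * (p.2.2.2 + 1) * (1 + p.1 + p.2.1) * (1 + p.2.1 + p.2.2.1) *
            (a + p.2.1 + p.2.2.1 + p.2.2.2 - p.1 * p.2.2.1)))))
    (p : ℝ × ℝ × ℝ × ℝ)
    (hp1 : 0 < p.1) (hp2 : 0 < p.2.1) (hp3 : 0 < p.2.2.1) (hp4 : 0 < p.2.2.2) :
    X (F p) = fderiv ℝ F p (X p) := by
  obtain rfl : F = fun q => (q.2.1, q.2.2.1, q.2.2.2, lynessNext a q) := funext hF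
  rw [fderiv_shift_apply (differentiableAt_lynessNext a hp1.ne'),
    fderiv_lynessNext_apply a hp1.ne', hX, hX]
  obtain ⟨x, y, z, t⟩ := p
  dsimp only [lynessNext] at hp1 hp2 hp3 hp4 ⊢
  have hs : 0 < a + y + z + t := by positivity
  ext <;> simp only [Prod.smul_mk, smul_eq_mul] <;> field_simp <;> ring
end

section
/- For the 4-dimensional Lyness map with Lie symmetry X_4 as above, the vector field X_4 annihilates the first integrals V_1 and V_2: the directional derivatives X_4(V_1) = 0 and X_4(V_2) = 0 identically on the positive orthant. Hence the level sets {V_1 = h} ∩ {V_2 = k} ∩ Q⁺ are invariant under the flow of X_4. -/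
/-!
Both first integrals are quotients `N / D` of polynomials with the same denominator
`D = x y z t`, and `X₄ = D⁻¹ • W` for a polynomial vector field `W`. By the quotient rule,
`X₄(N / D) = (W(N) D - N W(D)) / D³`, so the theorem reduces to the two polynomial identities
`W(Nᵢ) D = Nᵢ W(D)`.
-/

theorem fderiv_div_apply {𝕜 E : Type*} [NontriviallyNormedField 𝕜] [NormedAddCommGroup E]
    [NormedSpace 𝕜 E] {N D : E → 𝕜} {p : E} (hN : DifferentiableAt 𝕜 N p)
    (hD : DifferentiableAt 𝕜 D p) (hDp : D p ≠ 0) (v : E) :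
    fderiv 𝕜 (fun q => N q / D q) p v =
      (fderiv 𝕜 N p v * D p - N p * fderiv 𝕜 D p v) / D p ^ 2 := by
  have h : HasFDerivAt (fun q => N q * (D q)⁻¹) _ p :=
    hN.hasFDerivAt.mul ((hasFDerivAt_inv hDp).comp p hD.hasFDerivAt)
  simp only [div_eq_mul_inv, h.fderiv, add_apply, smul_apply, ContinuousLinearMap.comp_apply,
    ContinuousLinearMap.toSpanSingleton_apply, smul_eq_mul]
  field_simp
  ring

theorem fderiv_div_apply_smul_eq_zero {𝕜 E : Type*} [NontriviallyNormedField 𝕜]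
    [NormedAddCommGroup E] [NormedSpace 𝕜 E] {N D : E → 𝕜} {p w : E}
    (hN : DifferentiableAt 𝕜 N p) (hD : DifferentiableAt 𝕜 D p) (hDp : D p ≠ 0)
    (hw : fderiv 𝕜 N p w * D p = N p * fderiv 𝕜 D p w) (c : 𝕜) :
    fderiv 𝕜 (fun q => N q / D q) p (c • w) = 0 := by
  rw [map_smul, fderiv_div_apply hN hD hDp, hw, sub_self, zero_div, smul_zero]

namespace Lyness4

def denom (q : ℝ × ℝ × ℝ × ℝ) : ℝ := q.1 * q.2.1 * q.2.2.1 * q.2.2.2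

def numV₁ (a : ℝ) (q : ℝ × ℝ × ℝ × ℝ) : ℝ :=
  (a + q.1 + q.2.1 + q.2.2.1 + q.2.2.2) * (q.1 + 1) * (q.2.1 + 1) * (q.2.2.1 + 1) * (q.2.2.2 + 1)

def numV₂ (a : ℝ) (q : ℝ × ℝ × ℝ × ℝ) : ℝ :=
  (a + q.1 + q.2.1 + q.2.2.1 + q.2.2.2 + q.1 * q.2.2.2) * (1 + q.1 + q.2.1) *
    (1 + q.2.1 + q.2.2.1) * (1 + q.2.2.1 + q.2.2.2)

def numX (a : ℝ) (q : ℝ × ℝ × ℝ × ℝ) : ℝ × ℝ × ℝ × ℝ :=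
  (q.1 * (q.1 + 1) * (1 + q.2.1 + q.2.2.1) * (1 + q.2.2.1 + q.2.2.2) *
      (a + q.1 + q.2.1 + q.2.2.1 - q.2.1 * q.2.2.2),
    q.2.1 * (q.2.1 + 1) * (1 + q.2.2.1 + q.2.2.2) *
      (a + q.1 + q.2.1 + q.2.2.1 + q.2.2.2 + q.1 * q.2.2.2) * (q.1 - q.2.2.1),
    q.2.2.1 * (q.2.2.1 + 1) * (1 + q.1 + q.2.1) *
      (a + q.1 + q.2.1 + q.2.2.1 + q.2.2.2 + q.1 * q.2.2.2) * (q.2.1 - q.2.2.2),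
    -(q.2.2.2 * (q.2.2.2 + 1) * (1 + q.1 + q.2.1) * (1 + q.2.1 + q.2.2.1) *
      (a + q.2.1 + q.2.2.1 + q.2.2.2 - q.1 * q.2.2.1)))

theorem differentiable_denom : Differentiable ℝ denom := by
  unfold denom; fun_prop

theorem differentiable_numV₁ (a : ℝ) : Differentiable ℝ (numV₁ a) := by
  unfold numV₁; fun_prop

theorem differentiable_numV₂ (a : ℝ) : Differentiable ℝ (numV₂ a) := by
  unfold numV₂; fun_prop

theorem fderiv_numV₁_numX_mul_denom (a : ℝ) (p : ℝ × ℝ × ℝ × ℝ) :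
    fderiv ℝ (numV₁ a) p (numX a p) * denom p = numV₁ a p * fderiv ℝ denom p (numX a p) := by
  unfold numV₁ denom numX
  simp (disch := fun_prop) only [fderiv_fun_mul, fderiv_fun_add, fderiv.fst, fderiv.snd,
    fderiv_fun_id, fderiv_fun_const, ContinuousLinearMap.comp_id, ContinuousLinearMap.comp_apply,
    ContinuousLinearMap.coe_fst', ContinuousLinearMap.coe_snd', add_apply, smul_apply,
    zero_apply, Pi.zero_apply, smul_eq_mul]
  ring

theorem fderiv_numV₂_numX_mul_denom (a : ℝ) (p : ℝ × ℝ × ℝ × ℝ) :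
    fderiv ℝ (numV₂ a) p (numX a p) * denom p = numV₂ a p * fderiv ℝ denom p (numX a p) := by
  unfold numV₂ denom numX
  simp (disch := fun_prop) only [fderiv_fun_mul, fderiv_fun_add, fderiv.fst, fderiv.snd,
    fderiv_fun_id, fderiv_fun_const, ContinuousLinearMap.comp_id, ContinuousLinearMap.comp_apply,
    ContinuousLinearMap.coe_fst', ContinuousLinearMap.coe_snd', add_apply, smul_apply,
    zero_apply, Pi.zero_apply, smul_eq_mul]
  ring

end Lyness4

theorem lyness4_X4_annihilates_V1_V2_general (a : ℝ)
    (X : ℝ × ℝ × ℝ × ℝ → ℝ × ℝ × ℝ × ℝ)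
    (hX : ∀ p : ℝ × ℝ × ℝ × ℝ,
      X p = (1 / (p.1 * p.2.1 * p.2.2.1 * p.2.2.2)) •
        ((p.1 * (p.1 + 1) * (1 + p.2.1 + p.2.2.1) * (1 + p.2.2.1 + p.2.2.2) *
            (a + p.1 + p.2.1 + p.2.2.1 - p.2.1 * p.2.2.2),
          p.2.1 * (p.2.1 + 1) * (1 + p.2.2.1 + p.2.2.2) *
            (a + p.1 + p.2.1 + p.2.2.1 + p.2.2.2 + p.1 * p.2.2.2) * (p.1 - p.2.2.1),
          p.2.2.1 * (p.2.2.1 + 1) * (1 + p.1 + p.2.1) *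
            (a + p.1 + p.2.1 + p.2.2.1 + p.2.2.2 + p.1 * p.2.2.2) * (p.2.1 - p.2.2.2),
          -(p.2.2.2 * (p.2.2.2 + 1) * (1 + p.1 + p.2.1) * (1 + p.2.1 + p.2.2.1) *
            (a + p.2.1 + p.2.2.1 + p.2.2.2 - p.1 * p.2.2.1)))))
    (V1 V2 : ℝ × ℝ × ℝ × ℝ → ℝ)
    (hV1 : ∀ p : ℝ × ℝ × ℝ × ℝ, V1 p =
      (a + p.1 + p.2.1 + p.2.2.1 + p.2.2.2) * (p.1 + 1) * (p.2.1 + 1) *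
        (p.2.2.1 + 1) * (p.2.2.2 + 1) / (p.1 * p.2.1 * p.2.2.1 * p.2.2.2))
    (hV2 : ∀ p : ℝ × ℝ × ℝ × ℝ, V2 p =
      (a + p.1 + p.2.1 + p.2.2.1 + p.2.2.2 + p.1 * p.2.2.2) * (1 + p.1 + p.2.1) *
        (1 + p.2.1 + p.2.2.1) * (1 + p.2.2.1 + p.2.2.2) /
        (p.1 * p.2.1 * p.2.2.1 * p.2.2.2))
    (p : ℝ × ℝ × ℝ × ℝ)
    (hp1 : 0 < p.1) (hp2 : 0 < p.2.1) (hp3 : 0 < p.2.2.1) (hp4 : 0 < p.2.2.2) :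
    fderiv ℝ V1 p (X p) = 0 ∧ fderiv ℝ V2 p (X p) = 0 := by
  open Lyness4 in
  have hX' : X p = (1 / denom p) • numX a p := hX p
  have hV1' : V1 = fun q => numV₁ a q / denom q := funext hV1
  have hV2' : V2 = fun q => numV₂ a q / denom q := funext hV2
  have hp : denom p ≠ 0 := by unfold denom; positivity
  rw [hX', hV1', hV2']
  exact ⟨fderiv_div_apply_smul_eq_zero (differentiable_numV₁ a p) (differentiable_denom p) hp
      (fderiv_numV₁_numX_mul_denom a p) _,
    fderiv_div_apply_smul_eq_zero (differentiable_numV₂ a p) (differentiable_denom p) hp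
      (fderiv_numV₂_numX_mul_denom a p) _⟩

/-- the Lie symmetry `X₄` of the 4-dimensional Lyness map
annihilates the first integrals `V₁` and `V₂`: the directional derivatives
`∇V₁·X₄` and `∇V₂·X₄` vanish identically on the positive orthant. -/
theorem lyness4_X4_annihilates_V1_V2 (a : ℝ) (ha : 0 ≤ a)
    (X : ℝ × ℝ × ℝ × ℝ → ℝ × ℝ × ℝ × ℝ)
    (hX : ∀ p : ℝ × ℝ × ℝ × ℝ,
      X p = (1 / (p.1 * p.2.1 * p.2.2.1 * p.2.2.2)) •
        ((p.1 * (p.1 + 1) * (1 + p.2.1 + p.2.2.1) * (1 + p.2.2.1 + p.2.2.2) *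
            (a + p.1 + p.2.1 + p.2.2.1 - p.2.1 * p.2.2.2),
          p.2.1 * (p.2.1 + 1) * (1 + p.2.2.1 + p.2.2.2) *
            (a + p.1 + p.2.1 + p.2.2.1 + p.2.2.2 + p.1 * p.2.2.2) * (p.1 - p.2.2.1),
          p.2.2.1 * (p.2.2.1 + 1) * (1 + p.1 + p.2.1) *
            (a + p.1 + p.2.1 + p.2.2.1 + p.2.2.2 + p.1 * p.2.2.2) * (p.2.1 - p.2.2.2),
          -(p.2.2.2 * (p.2.2.2 + 1) * (1 + p.1 + p.2.1) * (1 + p.2.1 + p.2.2.1) *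
            (a + p.2.1 + p.2.2.1 + p.2.2.2 - p.1 * p.2.2.1)))))
    (V1 V2 : ℝ × ℝ × ℝ × ℝ → ℝ)
    (hV1 : ∀ p : ℝ × ℝ × ℝ × ℝ, V1 p =
      (a + p.1 + p.2.1 + p.2.2.1 + p.2.2.2) * (p.1 + 1) * (p.2.1 + 1) *
        (p.2.2.1 + 1) * (p.2.2.2 + 1) / (p.1 * p.2.1 * p.2.2.1 * p.2.2.2))
    (hV2 : ∀ p : ℝ × ℝ × ℝ × ℝ, V2 p =
      (a + p.1 + p.2.1 + p.2.2.1 + p.2.2.2 + p.1 * p.2.2.2) * (1 + p.1 + p.2.1) *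
        (1 + p.2.1 + p.2.2.1) * (1 + p.2.2.1 + p.2.2.2) /
        (p.1 * p.2.1 * p.2.2.1 * p.2.2.2))
    (p : ℝ × ℝ × ℝ × ℝ)
    (hp1 : 0 < p.1) (hp2 : 0 < p.2.1) (hp3 : 0 < p.2.2.1) (hp4 : 0 < p.2.2.2) :
    fderiv ℝ V1 p (X p) = 0 ∧ fderiv ℝ V2 p (X p) = 0 :=
  lyness4_X4_annihilates_V1_V2_general a X hX V1 V2 hV1 hV2 p hp1 hp2 hp3 hp4
end

section
/- For the 5-dimensional Lyness map F(x,y,z,t,s) = (y,z,t,s,(a+y+z+t+s)/x) with a ≥ 0, every point of the curve L = {(x, (2x+a)/(x−2), x, (2x+a)/(x−2), x) : x > 2} belongs to Q⁺ and is a periodic point of F of period dividing 2: F(F(p)) = p for all p ∈ L. -/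
/-- for the 5-dimensional Lyness map, every point of the curve
`L = {(x, (2x+a)/(x−2), x, (2x+a)/(x−2), x) : x > 2}` lies in the positive
orthant and is 2-periodic: `F(F(p)) = p`. -/
theorem lyness5_curve_two_periodic (a : ℝ) (ha : 0 ≤ a)
    (F : ℝ × ℝ × ℝ × ℝ × ℝ → ℝ × ℝ × ℝ × ℝ × ℝ)
    (hF : ∀ p : ℝ × ℝ × ℝ × ℝ × ℝ,
      F p = (p.2.1, p.2.2.1, p.2.2.2.1, p.2.2.2.2,
        (a + p.2.1 + p.2.2.1 + p.2.2.2.1 + p.2.2.2.2) / p.1))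
    (x : ℝ) (hx : 2 < x) :
    let p : ℝ × ℝ × ℝ × ℝ × ℝ :=
      (x, (2 * x + a) / (x - 2), x, (2 * x + a) / (x - 2), x)
    (0 < p.1 ∧ 0 < p.2.1 ∧ 0 < p.2.2.1 ∧ 0 < p.2.2.2.1 ∧ 0 < p.2.2.2.2) ∧
      F (F p) = p := by
  intro p
  have hx0 : (0:ℝ) < x := by linarith
  have hx2 : (0:ℝ) < x - 2 := by linarith
  have hy : 0 < (2 * x + a) / (x - 2) := div_pos (by linarith) hx2
  have hxne : x ≠ 0 := ne_of_gt hx0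
  have hx2ne : x - 2 ≠ 0 := ne_of_gt hx2
  have hyne : (2 * x + a) / (x - 2) ≠ 0 := ne_of_gt hy
  refine ⟨⟨hx0, hy, hx0, hy, hx0⟩, ?_⟩
  rw [hF, hF]
  simp only [p]
  ext <;> simp <;> field_simp <;> ring
end

section
/- Consider the 3-dimensional Lyness map F(x,y,z) = (y,z,(a+y+z)/x) with a ≥ 0, restricted to a level set {W = 1/k} of the 2-integral W(x,y,z) = (x+1)(z+1)/y (so y = k(x+1)(z+1) with k > 0). Then the second iterate F² induces on the (x,z) coordinates the reduced second-order map F̃(x,z) = (z, (a+k+z(k+1))/(k·x·(z+1))). Precisely, if y = k(x+1)(z+1), then F²(x,y,z) = (z, y', z') where z' = (a+k+z(k+1))/(k·x·(z+1)) and y' = k(z+1)(z'+1). -/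
/-- reduction of the 3-dimensional Lyness map on a level set of
the 2-integral `W(x,y,z) = (x+1)(z+1)/y`. If `y = k(x+1)(z+1)` then
`F²(x,y,z) = (z, k(z+1)(z'+1), z')` with `z' = (a+k+z(k+1))/(k·x·(z+1))`. -/
theorem lyness3_order_reduction (a : ℝ) (ha : 0 ≤ a) (k : ℝ) (hk : 0 < k)
    (F : ℝ × ℝ × ℝ → ℝ × ℝ × ℝ)
    (hF : ∀ p : ℝ × ℝ × ℝ, F p = (p.2.1, p.2.2, (a + p.2.1 + p.2.2) / p.1))
    (x y z : ℝ) (hx : 0 < x) (hy : 0 < y) (hz : 0 < z)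
    (hlevel : y = k * (x + 1) * (z + 1)) :
    let z' : ℝ := (a + k + z * (k + 1)) / (k * x * (z + 1))
    F (F (x, y, z)) = (z, k * (z + 1) * (z' + 1), z') := by
  intro z'
  have hx0 : x ≠ 0 := ne_of_gt hx
  have hy0 : y ≠ 0 := ne_of_gt hy
  have hk0 : k ≠ 0 := ne_of_gt hk
  have hz1 : z + 1 ≠ 0 := by nlinarith
  have hx1 : x + 1 ≠ 0 := by nlinarith
  simp only [hF]
  subst hlevel
  refine Prod.ext rfl (Prod.ext ?_ ?_) <;> simp only [z'] <;> field_simp <;> ring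
end

section
/- Let k ≥ 3 and for 1 ≤ i ≤ k−1 set L_i = 1 + x_i + x_{i+1}. Define Q_k(x_1, x_2, x_4, ..., x_k) = −x_2(1+x_2)Π_{i=4}^{k−1}L_i + (x_2−x_4)L_1 Π_{i=4}^{k−1}L_i + x_4(1+x_4)L_1 Π_{i=5}^{k−1}L_i + Σ_{m=5}^{k−1} x_m(x_m+1)(x_{m−1}−x_{m+1}) L_1 Π_{i=4, i≠m−1,m}^{k−1} L_i. Then for all k ≥ 6, the polynomial identity Q_k = (Π_{i=4}^{k−2} L_i)·[x_1 x_2 L_{k−1} − x_{k−1} x_k L_1] holds. -/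
/-!
Induction on `k`, starting from `k = 5`, where the identity already holds. Passing from `k` to
`k + 1` multiplies every term of `Q_k` by `L_k` and adds the new summand `m = k`; the identity
`x_k (1 + x_k) (x_{k-1} - x_{k+1}) = x_{k-1} x_k L_k - L_{k-1} x_k x_{k+1}` then turns `L_k` times
the right-hand side for `k` into the right-hand side for `k + 1`.
-/

open Finset

theorem Finset.prod_Icc_sdiff_pair_succ_top {M : Type*} [CommMonoid M] (f : ℕ → M)
    {a m k : ℕ} (ha : a ≤ k + 1) (hm : m ≤ k) :
    ∏ i ∈ Icc a (k + 1) \ {m - 1, m}, f i = (∏ i ∈ Icc a k \ {m - 1, m}, f i) * f (k + 1) := by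
  have hset : Icc a (k + 1) \ {m - 1, m} = insert (k + 1) (Icc a k \ {m - 1, m}) := by
    ext i
    simp only [mem_sdiff, mem_Icc, mem_insert, mem_singleton]
    omega
  rw [hset, prod_insert (by simp), mul_comm]

namespace Lyness

variable {R : Type*} [CommRing R] (x L : ℕ → R)

def Q (k : ℕ) : R :=
  -x 2 * (1 + x 2) * (∏ i ∈ Icc 4 (k - 1), L i)
    + (x 2 - x 4) * L 1 * (∏ i ∈ Icc 4 (k - 1), L i)
    + x 4 * (1 + x 4) * L 1 * (∏ i ∈ Icc 5 (k - 1), L i)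
    + ∑ m ∈ Icc 5 (k - 1),
        x m * (x m + 1) * (x (m - 1) - x (m + 1)) * L 1 *
          ∏ i ∈ (Icc 4 (k - 1)) \ {m - 1, m}, L i

theorem Q_succ {k : ℕ} (hk : 5 ≤ k) :
    Q x L (k + 1) = Q x L k * L k
      + x k * (x k + 1) * (x (k - 1) - x (k + 1)) * L 1 * ∏ i ∈ Icc 4 (k - 2), L i := by
  obtain ⟨j, rfl⟩ : ∃ j, k = j + 1 := ⟨k - 1, by omega⟩
  have hlast : Icc 4 (j + 1) \ {j, j + 1} = Icc 4 (j - 1) := by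
    ext i
    simp only [mem_sdiff, mem_Icc, mem_insert, mem_singleton]
    omega
  have hsum : ∑ m ∈ Icc 5 j, x m * (x m + 1) * (x (m - 1) - x (m + 1)) * L 1 *
        ∏ i ∈ Icc 4 (j + 1) \ {m - 1, m}, L i
      = (∑ m ∈ Icc 5 j, x m * (x m + 1) * (x (m - 1) - x (m + 1)) * L 1 *
        ∏ i ∈ Icc 4 j \ {m - 1, m}, L i) * L (j + 1) := by
    rw [sum_mul]
    refine sum_congr rfl fun m hm => ?_
    rw [prod_Icc_sdiff_pair_succ_top _ (by omega) (mem_Icc.mp hm).2]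
    ring
  simp only [Q, Nat.add_sub_cancel, show j + 1 - 2 = j - 1 by omega]
  rw [prod_Icc_succ_top (by omega), prod_Icc_succ_top (by omega),
    sum_Icc_succ_top (by omega), hsum, Nat.add_sub_cancel, hlast]
  ring

theorem Q_eq {k : ℕ} (hk : 5 ≤ k) (hL : ∀ i, L i = 1 + x i + x (i + 1)) :
    Q x L k = (∏ i ∈ Icc 4 (k - 2), L i) * (x 1 * x 2 * L (k - 1) - x (k - 1) * x k * L 1) := by
  induction k, hk using Nat.le_induction with
  | base =>
    simp only [Q, Nat.reduceSub, Nat.add_one_sub_one, Icc_self, prod_singleton,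
      Icc_eq_empty_of_lt, Nat.lt_add_one, prod_empty, sum_empty, hL 1, hL 4]
    ring
  | succ k hk ih =>
    have hprod : ∏ i ∈ Icc 4 (k - 1), L i = (∏ i ∈ Icc 4 (k - 2), L i) * L (k - 1) := by
      rw [show k - 1 = k - 2 + 1 by omega, prod_Icc_succ_top (by omega)]
    have key : x k * (x k + 1) * (x (k - 1) - x (k + 1))
        = x (k - 1) * x k * L k - L (k - 1) * x k * x (k + 1) := by
      rw [hL k, hL (k - 1), Nat.sub_add_cancel (by omega : 1 ≤ k)]
      ring
    rw [Q_succ x L hk, ih, Nat.add_sub_cancel, show k + 1 - 2 = k - 1 by omega, hprod]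
    linear_combination (L 1 * ∏ i ∈ Icc 4 (k - 2), L i) * key

end Lyness

/-- the key polynomial identity
`Q_k = (∏_{i=4}^{k−2} L_i)·[x₁x₂L_{k−1} − x_{k−1}x_k L₁]` for `k ≥ 6`, where
`L_i = 1 + x_i + x_{i+1}`. -/
theorem lyness_Qk_identity (k : ℕ) (hk : 6 ≤ k) (x : ℕ → ℝ)
    (L : ℕ → ℝ) (hL : ∀ i, L i = 1 + x i + x (i + 1)) :
    -x 2 * (1 + x 2) * (∏ i ∈ Icc 4 (k - 1), L i)
      + (x 2 - x 4) * L 1 * (∏ i ∈ Icc 4 (k - 1), L i)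
      + x 4 * (1 + x 4) * L 1 * (∏ i ∈ Icc 5 (k - 1), L i)
      + ∑ m ∈ Icc 5 (k - 1),
          x m * (x m + 1) * (x (m - 1) - x (m + 1)) * L 1 *
            ∏ i ∈ (Icc 4 (k - 1)) \ {m - 1, m}, L i
    = (∏ i ∈ Icc 4 (k - 2), L i) *
        (x 1 * x 2 * L (k - 1) - x (k - 1) * x k * L 1) :=
  Lyness.Q_eq x L (by omega) hL
end
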